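/- Let X be an alphabet and U, V ⊆ X with U ⊆ V. Let r ∈ X*·U, x ∈ U⁺, y ∈ (X∖U)⁺, and s ∈ X* not starting with a letter of U. Then f_V(rxys) ≤ f_V(ryxs), where f_V(w) counts the maximal nonempty blocks of letters from V in w. -/
import Mathlib


/-- `blockCount p w` is the number of maximal nonempty blocks of letters
satisfying `p` in the word `w`. -/
def blockCount {X : Type*} (p : X → Bool) (w : List X) : ℕ :=
  ((w.map p).destutter (· ≠ ·)).count true

/-- Auxiliary block counter on boolean lists, carrying the previous letter. -/
def cnt : Option Bool → List Bool → ℕ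
  | _, [] => 0
  | prev, a :: l => (if a = true ∧ prev ≠ some true then 1 else 0) + cnt (some a) l

lemma count_destutter' (l : List Bool) : ∀ a : Bool,
    (List.destutter' (· ≠ ·) a l).count true
      = (if a = true then 1 else 0) + cnt (some a) l := by
  induction l with
  | nil => intro a; cases a <;> simp [cnt, List.destutter'_nil]
  | cons b l ih =>
    intro a
    rw [List.destutter'_cons]
    by_cases h : a = b
    · subst h
      simp only [ne_eq, not_true_eq_false, if_false, ih, cnt]
      cases a <;> simp
    · simp only [ne_eq, h, not_false_eq_true, if_true, List.count_cons, ih, cnt]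
      cases a <;> cases b <;> simp_all
      omega

lemma blockCount_eq_cnt {X : Type*} (p : X → Bool) (w : List X) :
    blockCount p w = cnt none (w.map p) := by
  cases w with
  | nil => simp [blockCount, cnt]
  | cons a l =>
    simp only [blockCount, List.map_cons, List.destutter_cons', count_destutter', cnt]
    cases p a <;> simp

/-- the last element of `u`, defaulting to `prev`. -/
def lst (prev : Option Bool) : List Bool → Option Bool
  | [] => prev
  | a :: u => lst (some a) u

lemma cnt_append (u : List Bool) : ∀ (prev : Option Bool) (v : List Bool),
    cnt prev (u ++ v) = cnt prev u + cnt (lst prev u) v := by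
  induction u with
  | nil => intro prev v; simp [cnt, lst]
  | cons a u ih =>
    intro prev v
    simp only [List.cons_append, cnt, lst, List.append_eq, ih]
    omega

lemma lst_all_true {u : List Bool} (hu : u ≠ []) (h : ∀ b ∈ u, b = true) (prev : Option Bool) :
    lst prev u = some true := by
  induction u generalizing prev with
  | nil => simp at hu
  | cons a u ih =>
    cases u with
    | nil => simp [lst, h a (by simp)]
    | cons b u =>
      show lst (some a) (b :: u) = some true
      exact ih (by simp) (fun c hc => h c (List.mem_cons_of_mem _ hc)) (some a)

lemma cnt_trues {u : List Bool} (h : ∀ b ∈ u, b = true) :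
    ∀ v, cnt (some true) (u ++ v) = cnt (some true) v := by
  induction u with
  | nil => simp
  | cons a u ih =>
    intro v
    have ha : a = true := h a (by simp)
    subst ha
    simp only [List.cons_append, cnt, List.append_eq]
    rw [ih (fun c hc => h c (List.mem_cons_of_mem _ hc))]
    simp

lemma cnt_trues' {u : List Bool} (hu : u ≠ []) (h : ∀ b ∈ u, b = true) (q : Option Bool) (v : List Bool) :
    cnt q (u ++ v) = (if q ≠ some true then 1 else 0) + cnt (some true) v := by
  cases u with
  | nil => simp at hu
  | cons a u =>
    have ha : a = true := h a (by simp)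
    subst ha
    simp only [List.cons_append, cnt, List.append_eq]
    rw [cnt_trues (fun c hc => h c (List.mem_cons_of_mem _ hc))]
    by_cases hq : q = some true <;> simp [hq]

lemma lst_concat (u : List Bool) (a : Bool) : ∀ prev, lst prev (u ++ [a]) = some a := by
  induction u with
  | nil => intro prev; simp [lst]
  | cons b u ih => intro prev; simpa [lst] using ih (some b)

lemma cnt_le (v : List Bool) (q q' : Option Bool) : cnt q v ≤ 1 + cnt q' v := by
  cases v with
  | nil => simp [cnt]
  | cons a v =>
    simp only [cnt]
    split <;> split <;> omega

lemma cnt_le' (v : List Bool) (q : Option Bool) :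
    cnt q v ≤ (if q ≠ some true then 1 else 0) + cnt (some true) v := by
  by_cases hq : q = some true
  · simp [hq]
  · simpa [hq] using cnt_le v q (some true)

/-- Lemma on block counts: with `U ⊆ V`, if `r` ends in a letter of `U`,
`x ∈ U⁺`, `y ∈ (X∖U)⁺`, and `s` does not start with a letter of `U`, then
the number of `V`-blocks of `rxys` is at most that of `ryxs`. -/
theorem stmt_13 {X : Type*} [Fintype X] (U V : Set X)
    [DecidablePred (· ∈ V)] (hUV : U ⊆ V)
    (r x y s : List X)
    (hr : ∃ r' : List X, ∃ a ∈ U, r = r' ++ [a])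
    (hx : x ≠ [] ∧ ∀ a ∈ x, a ∈ U)
    (hy : y ≠ [] ∧ ∀ a ∈ y, a ∉ U)
    (hs : ∀ a : X, s.head? = some a → a ∉ U) :
    blockCount (fun a => decide (a ∈ V)) (r ++ x ++ y ++ s) ≤
      blockCount (fun a => decide (a ∈ V)) (r ++ y ++ x ++ s) := by
  classical
  obtain ⟨r', a0, ha0, hreq⟩ := hr
  obtain ⟨hxne, hxU⟩ := hx
  set p : X → Bool := fun a => decide (a ∈ V) with hp
  have htx : ∀ c ∈ x.map p, c = true := by
    intro c hc
    obtain ⟨a, ha, rfl⟩ := List.mem_map.1 hc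
    simpa [hp] using hUV (hxU a ha)
  have htxne : x.map p ≠ [] := by
    simpa using hxne
  have hbl : lst none (r.map p) = some true := by
    subst hreq
    rw [List.map_append, List.map_singleton, lst_concat]
    simp only [hp, Option.some.injEq, decide_eq_true_eq]
    exact hUV ha0
  rw [blockCount_eq_cnt, blockCount_eq_cnt]
  simp only [List.map_append, List.append_assoc]
  rw [cnt_append (r.map p), cnt_append (r.map p), hbl,
    cnt_trues htx, cnt_append (y.map p), cnt_append (y.map p),
    cnt_trues' htxne htx]
  have h := cnt_le' (s.map p) (lst (some true) (y.map p))
  omega
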